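/- For every s ∈ ℂ with 0 < Re(s) < 1 and x ≥ 1: ∑_{n ≤ x} n^{-s} = ζ(s) + x^{1-s}/(1−s) − ψ(x)·x^{-s} + s·∫_x^∞ ψ(t)·t^{-s-1} dt, where ψ(t) = {t} − 1/2. -/

import Mathlib

/-!
Abel summation against `t ↦ t ^ (-s)`, with `⌊t⌋ = t - ψ(t) - 1/2`, gives for `Re s > 0`, `s ≠ 1`
and `x ≥ 1` the identity with `ζ(s)` replaced by
`Z(s) = 1/2 + 1/(s-1) - s ∫_1^∞ ψ(t) t^(-s-1) dt`. For `Re s > 1` letting `x → ∞` shows `Z = ζ`.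
The integral is a Mellin transform of a bounded function vanishing near `0`, so `Z` is holomorphic
on the connected set `{Re s > 0} \ {1}`, and the identity theorem gives `Z = ζ` there.
-/

open MeasureTheory Complex Set Filter Topology

noncomputable def sawtooth (t : ℝ) : ℂ := ((Int.fract t - 1/2 : ℝ) : ℂ)

noncomputable def sawtoothTail (s : ℂ) (x : ℝ) : ℂ :=
  ∫ t in Ioi x, sawtooth t * (t : ℂ) ^ (-s - 1)

noncomputable def zetaViaSawtooth (s : ℂ) : ℂ :=
  1 / 2 + 1 / (s - 1) - s * sawtoothTail s 1

lemma norm_sawtooth_le (t : ℝ) : ‖sawtooth t‖ ≤ 1 / 2 := by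
  rw [sawtooth, norm_real, Real.norm_eq_abs, abs_le]
  constructor <;> linarith [Int.fract_nonneg t, Int.fract_lt_one t]

lemma measurable_sawtooth : Measurable sawtooth :=
  measurable_ofReal.comp (measurable_fract.sub measurable_const)

lemma natCast_floor_eq_sub_sawtooth {t : ℝ} (ht : 0 ≤ t) :
    (⌊t⌋₊ : ℂ) = t - sawtooth t - 1 / 2 := by
  have h : (⌊t⌋₊ : ℝ) = t - Int.fract t := by
    rw [Int.self_sub_fract, ← Int.natCast_floor_eq_floor ht, Int.cast_natCast]
  rw [sawtooth, ← ofReal_natCast, h]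
  push_cast
  ring

lemma integrableOn_sawtooth_mul_cpow {s : ℂ} (hs : 0 < s.re) {a : ℝ} (ha : 0 < a) :
    IntegrableOn (fun t : ℝ ↦ sawtooth t * (t : ℂ) ^ (-s - 1)) (Ioi a) := by
  refine Integrable.mono'
    ((integrableOn_Ioi_rpow_of_lt (a := -s.re - 1) (by linarith) ha).const_mul (1 / 2))
    (measurable_sawtooth.mul (measurable_ofReal.pow_const _)).aestronglyMeasurable ?_
  filter_upwards [ae_restrict_mem measurableSet_Ioi] with t ht
  rw [norm_mul, norm_cpow_eq_rpow_re_of_pos (ha.trans ht)]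
  simpa using
    mul_le_mul_of_nonneg_right (norm_sawtooth_le t) (Real.rpow_nonneg (ha.trans ht).le _)

lemma tendsto_sawtoothTail_atTop {s : ℂ} (hs : 0 < s.re) :
    Tendsto (sawtoothTail s) atTop (𝓝 0) := by
  have h := tendsto_setIntegral_of_antitone (μ := volume) (fun x : ℝ ↦ measurableSet_Ioi)
    (fun _ _ hxy ↦ Ioi_subset_Ioi hxy) ⟨1, integrableOn_sawtooth_mul_cpow hs one_pos⟩
  have hempty : ⋂ x : ℝ, Ioi x = ∅ := iInter_eq_empty_iff.2 fun x ↦ ⟨x, lt_irrefl x⟩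
  rwa [hempty, Measure.restrict_empty, integral_zero_measure] at h

lemma sawtoothTail_eq_mellin (s : ℂ) {x : ℝ} (hx : 0 ≤ x) :
    sawtoothTail s x = mellin ((Ioi x).indicator sawtooth) (-s) := by
  rw [sawtoothTail, mellin, ← indicator_smul, setIntegral_indicator measurableSet_Ioi,
    Ioi_inter_Ioi, max_eq_right hx]
  simp_rw [smul_eq_mul, mul_comm]

lemma differentiableAt_sawtoothTail {s : ℂ} (hs : 0 < s.re) {x : ℝ} (hx : 0 < x) :
    DifferentiableAt ℂ (fun w ↦ sawtoothTail w x) s := by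
  simp_rw [sawtoothTail_eq_mellin _ hx.le]
  have hbdd : ∀ t, ‖(Ioi x).indicator sawtooth t‖ ≤ 1 / 2 := fun t ↦
    (norm_indicator_le_norm_self _ t).trans (norm_sawtooth_le t)
  have hmeas : Measurable ((Ioi x).indicator sawtooth) :=
    measurable_sawtooth.indicator measurableSet_Ioi
  refine DifferentiableAt.comp (g := mellin _) s ?_ differentiableAt_id.neg
  refine mellin_differentiableAt_of_isBigO_rpow (a := 0) (b := -s.re - 1) ?_ ?_ ?_ ?_ ?_
  · exact (locallyIntegrable_const (1 / 2 : ℝ)).locallyIntegrableOn _ |>.mono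
      hmeas.aestronglyMeasurable (ae_of_all _ fun t ↦ by simpa using hbdd t)
  · exact Asymptotics.isBigO_of_le' (c := 1 / 2) _ fun t ↦ by simpa using hbdd t
  · simpa using hs
  · refine (Asymptotics.isBigO_zero _ _).congr' ?_ EventuallyEq.rfl
    filter_upwards [nhdsWithin_le_nhds (Iio_mem_nhds hx)] with t ht
    exact (indicator_of_notMem (not_lt.2 (le_of_lt ht)) _).symm
  · simp

lemma hasDerivAt_ofReal_cpow {t : ℝ} (ht : 0 < t) (c : ℂ) :
    HasDerivAt (fun u : ℝ ↦ (u : ℂ) ^ c) (c * (t : ℂ) ^ (c - 1)) t :=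
  (hasStrictDerivAt_cpow_const (ofReal_mem_slitPlane.2 ht)).hasDerivAt.comp_ofReal

lemma sum_Icc_cpow_neg_eq_mul_floor_add_integral (s : ℂ) (x : ℝ) :
    ∑ n ∈ Finset.Icc 1 ⌊x⌋₊, (n : ℂ) ^ (-s)
      = (x : ℂ) ^ (-s) * ⌊x⌋₊ + s * ∫ t in Ioc 1 x, (t : ℂ) ^ (-s - 1) * ⌊t⌋₊ := by
  set c : ℕ → ℂ := fun n ↦ if n = 0 then 0 else 1
  have hc (n : ℕ) : ∑ k ∈ Finset.Icc 0 n, c k = n := by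
    simp [c, Finset.sum_ite, Finset.filter_ne']
  have hderiv {t : ℝ} (ht : t ∈ Icc 1 x) :
      HasDerivAt (fun u : ℝ ↦ (u : ℂ) ^ (-s)) (-s * (t : ℂ) ^ (-s - 1)) t :=
    hasDerivAt_ofReal_cpow (by linarith [ht.1]) (-s)
  have hcont : ContinuousOn (fun t : ℝ ↦ -s * (t : ℂ) ^ (-s - 1)) (Icc 1 x) := fun t ht ↦
    (continuousAt_const.mul
      (hasDerivAt_ofReal_cpow (by linarith [ht.1]) _).continuousAt).continuousWithinAt
  have h := sum_mul_eq_sub_integral_mul₀ c (by simp [c]) x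
    (fun t ht ↦ (hderiv ht).differentiableAt)
    (hcont.integrableOn_Icc.congr_fun (fun t ht ↦ (hderiv ht).deriv.symm) measurableSet_Icc)
  have hsum : ∑ k ∈ Finset.Icc 0 ⌊x⌋₊, (k : ℂ) ^ (-s) * c k
      = ∑ n ∈ Finset.Icc 1 ⌊x⌋₊, (n : ℂ) ^ (-s) := by
    rw [Finset.Icc_eq_cons_Ioc (Nat.zero_le _), Finset.sum_cons, ← Finset.Icc_add_one_left_eq_Ioc]
    simp only [c, if_pos, mul_zero, zero_add]
    refine Finset.sum_congr rfl fun k hk ↦ ?_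
    simp [Nat.one_le_iff_ne_zero.1 (Finset.mem_Icc.1 hk).1]
  have hint : ∫ t in Ioc 1 x,
        deriv (fun u : ℝ ↦ (u : ℂ) ^ (-s)) t * ∑ k ∈ Finset.Icc 0 ⌊t⌋₊, c k
      = -s * ∫ t in Ioc 1 x, (t : ℂ) ^ (-s - 1) * ⌊t⌋₊ := by
    rw [← integral_const_mul]
    refine setIntegral_congr_fun measurableSet_Ioc fun t ht ↦ ?_
    rw [(hderiv (Ioc_subset_Icc_self ht)).deriv, hc, mul_assoc]
  rw [hint, hc] at h
  simp only [ofReal_natCast] at h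
  rw [← hsum, h]
  ring

lemma integral_Ioc_ofReal_cpow {a b : ℝ} (ha : 0 < a) (hab : a ≤ b) {r : ℂ} (hr : r ≠ -1) :
    ∫ t in Ioc a b, (t : ℂ) ^ r = ((b : ℂ) ^ (r + 1) - (a : ℂ) ^ (r + 1)) / (r + 1) := by
  have h0 : (0 : ℝ) ∉ uIcc a b := by
    rw [uIcc_of_le hab]
    exact fun h ↦ ha.not_ge h.1
  rw [← intervalIntegral.integral_of_le hab, integral_cpow (Or.inr ⟨hr, h0⟩)]

lemma integrableOn_Ioc_ofReal_cpow {a b : ℝ} (ha : 0 < a) (r : ℂ) :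
    IntegrableOn (fun t : ℝ ↦ (t : ℂ) ^ r) (Ioc a b) := by
  rcases le_or_gt a b with hab | hab
  · refine (intervalIntegrable_iff_integrableOn_Ioc_of_le hab).1
      (intervalIntegral.intervalIntegrable_cpow (Or.inr ?_))
    rw [uIcc_of_le hab]
    exact fun h ↦ ha.not_ge h.1
  · simp [Ioc_eq_empty_of_le hab.le]

lemma sawtoothTail_sub_sawtoothTail {s : ℂ} (hs : 0 < s.re) {a b : ℝ} (ha : 0 < a)
    (hab : a ≤ b) :
    sawtoothTail s a - sawtoothTail s b = ∫ t in Ioc a b, sawtooth t * (t : ℂ) ^ (-s - 1) := by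
  rw [sub_eq_iff_eq_add, sawtoothTail, sawtoothTail, ← Ioc_union_Ioi_eq_Ioi hab]
  exact setIntegral_union (Ioc_disjoint_Ioi le_rfl) measurableSet_Ioi
    ((integrableOn_sawtooth_mul_cpow hs ha).mono_set Ioc_subset_Ioi_self)
    (integrableOn_sawtooth_mul_cpow hs (ha.trans_le hab))

lemma integral_Ioc_cpow_mul_floor {s : ℂ} (hs0 : 0 < s.re) (hs1 : s ≠ 1) {x : ℝ} (hx : 1 ≤ x) :
    ∫ t in Ioc 1 x, (t : ℂ) ^ (-s - 1) * ⌊t⌋₊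
      = ((x : ℂ) ^ (1 - s) - 1) / (1 - s) - (sawtoothTail s 1 - sawtoothTail s x)
        - ((x : ℂ) ^ (-s) - 1) / (-s) / 2 := by
  have hs0' : s ≠ 0 := ne_zero_of_re_pos hs0
  have hpoint : EqOn (fun t : ℝ ↦ (t : ℂ) ^ (-s - 1) * ⌊t⌋₊)
      (fun t ↦ (t : ℂ) ^ (-s) - sawtooth t * (t : ℂ) ^ (-s - 1) - 1 / 2 * (t : ℂ) ^ (-s - 1))
      (Ioc 1 x) := fun t ht ↦ by
    have ht0 : (t : ℂ) ≠ 0 := ofReal_ne_zero.2 (by linarith [ht.1])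
    have hpow : (t : ℂ) ^ (-s) = t * (t : ℂ) ^ (-s - 1) := by
      rw [cpow_sub _ _ ht0, cpow_one]; field_simp
    simp only [natCast_floor_eq_sub_sawtooth (by linarith [ht.1] : (0 : ℝ) ≤ t), hpow]
    ring
  have hA := integrableOn_Ioc_ofReal_cpow (b := x) one_pos (-s)
  have hB := integrableOn_Ioc_ofReal_cpow (b := x) one_pos (-s - 1)
  have hC := (integrableOn_sawtooth_mul_cpow hs0 one_pos).mono_set
    (Ioc_subset_Ioi_self : Ioc 1 x ⊆ Ioi 1)
  have hAC : IntegrableOn (fun t : ℝ ↦ (t : ℂ) ^ (-s) - sawtooth t * (t : ℂ) ^ (-s - 1))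
      (Ioc 1 x) := hA.sub hC
  rw [setIntegral_congr_fun measurableSet_Ioc hpoint, integral_sub hAC (hB.const_mul _),
    integral_sub hA hC, integral_const_mul, sawtoothTail_sub_sawtoothTail hs0 one_pos hx,
    integral_Ioc_ofReal_cpow one_pos hx (by simpa using hs1),
    integral_Ioc_ofReal_cpow one_pos hx (by simpa using hs0')]
  simp only [ofReal_one, one_cpow]
  ring_nf

theorem sum_Icc_cpow_neg_eq_zetaViaSawtooth_add {s : ℂ} (hs0 : 0 < s.re) (hs1 : s ≠ 1) {x : ℝ}
    (hx : 1 ≤ x) :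
    ∑ n ∈ Finset.Icc 1 ⌊x⌋₊, (n : ℂ) ^ (-s)
      = zetaViaSawtooth s + (x : ℂ) ^ (1 - s) / (1 - s) - sawtooth x * (x : ℂ) ^ (-s)
        + s * sawtoothTail s x := by
  have hs0' : s ≠ 0 := ne_zero_of_re_pos hs0
  have hs1' : 1 - s ≠ 0 := sub_ne_zero.2 hs1.symm
  have hs1'' : s - 1 ≠ 0 := sub_ne_zero.2 hs1
  have hpow : (x : ℂ) ^ (1 - s) = x * (x : ℂ) ^ (-s) := by
    rw [sub_eq_add_neg, cpow_add _ _ (ofReal_ne_zero.2 (by linarith)), cpow_one]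
  rw [sum_Icc_cpow_neg_eq_mul_floor_add_integral, integral_Ioc_cpow_mul_floor hs0 hs1 hx,
    natCast_floor_eq_sub_sawtooth (by linarith), zetaViaSawtooth, hpow]
  field_simp
  ring

lemma tendsto_ofReal_cpow_atTop {r : ℂ} (hr : r.re < 0) :
    Tendsto (fun x : ℝ ↦ (x : ℂ) ^ r) atTop (𝓝 0) := by
  rw [tendsto_zero_iff_norm_tendsto_zero]
  refine (tendsto_rpow_neg_atTop (neg_pos.2 hr)).congr' ?_
  filter_upwards [norm_ofReal_cpow_eventually_eq_atTop r] with x hx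
  rw [hx, neg_neg]

lemma tendsto_sum_Icc_cpow_neg {s : ℂ} (hs : 1 < s.re) :
    Tendsto (fun N : ℕ ↦ ∑ n ∈ Finset.Icc 1 N, (n : ℂ) ^ (-s)) atTop (𝓝 (riemannZeta s)) := by
  have h : HasSum (fun n : ℕ ↦ (n : ℂ) ^ (-s)) (riemannZeta s) := by
    simp_rw [cpow_neg, ← one_div]
    rw [zeta_eq_tsum_one_div_nat_cpow hs]
    exact (summable_one_div_nat_cpow.2 hs).hasSum
  refine ((tendsto_add_atTop_iff_nat 1).2 h.tendsto_sum_nat).congr fun N ↦ ?_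
  rw [Finset.range_eq_Ico, Finset.sum_eq_sum_Ico_succ_bot (by omega), zero_add,
    Finset.Ico_add_one_right_eq_Icc, Nat.cast_zero,
    zero_cpow (neg_ne_zero.2 (ne_zero_of_one_lt_re hs)), zero_add]

lemma zetaViaSawtooth_eq_riemannZeta_of_one_lt_re {s : ℂ} (hs : 1 < s.re) :
    zetaViaSawtooth s = riemannZeta s := by
  have hs0 : 0 < s.re := by linarith
  have hs1 : s ≠ 1 := by rintro rfl; simp at hs
  have hsum := (tendsto_sum_Icc_cpow_neg hs).comp (tendsto_nat_floor_atTop (α := ℝ))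
  have hpow : Tendsto (fun x : ℝ ↦ (x : ℂ) ^ (1 - s) / (1 - s)) atTop (𝓝 0) := by
    simpa using (tendsto_ofReal_cpow_atTop (r := 1 - s) (by simpa using hs)).div_const (1 - s)
  have hsaw : Tendsto (fun x : ℝ ↦ sawtooth x * (x : ℂ) ^ (-s)) atTop (𝓝 0) := by
    have h := (tendsto_ofReal_cpow_atTop (r := -s) (by simpa using hs0)).norm.const_mul (1 / 2)
    rw [norm_zero, mul_zero] at h
    refine squeeze_zero_norm (fun x ↦ ?_) h
    rw [norm_mul]
    exact mul_le_mul_of_nonneg_right (norm_sawtooth_le x) (norm_nonneg _)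
  have hlim := ((tendsto_const_nhds (x := zetaViaSawtooth s)).add hpow |>.sub hsaw).add
    ((tendsto_sawtoothTail_atTop hs0).const_mul s)
  simp only [add_zero, sub_zero, mul_zero] at hlim
  refine tendsto_nhds_unique (hlim.congr' ?_) hsum
  filter_upwards [eventually_ge_atTop 1] with x hx
  exact (sum_Icc_cpow_neg_eq_zetaViaSawtooth_add hs0 hs1 hx).symm

lemma differentiableAt_zetaViaSawtooth {s : ℂ} (hs0 : 0 < s.re) (hs1 : s ≠ 1) :
    DifferentiableAt ℂ zetaViaSawtooth s := by
  have h := differentiableAt_sawtoothTail hs0 one_pos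
  have hs1' : s - 1 ≠ 0 := sub_ne_zero.2 hs1
  unfold zetaViaSawtooth
  fun_prop (disch := assumption)

lemma isPreconnected_re_pos_diff_one : IsPreconnected {s : ℂ | 0 < s.re ∧ s ≠ 1} := by
  -- two convex half-planes whose boundary lines pass through `1`, joined by `{Re s > 1}`
  have hconvex (a : ℝ) : Convex ℝ ({s : ℂ | 0 < s.re} ∩ {s | -1 < a * s.im - s.re}) :=
    (convex_halfSpace_re_gt 0).inter <| convex_halfSpace_gt
      ⟨fun z w ↦ by simp only [add_im, add_re]; ring,
        fun c z ↦ by simp only [smul_im, smul_re, smul_eq_mul]; ring⟩ _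
  have hU : {s : ℂ | 0 < s.re ∧ s ≠ 1}
      = (({s : ℂ | 0 < s.re} ∩ {s | -1 < 1 * s.im - s.re}) ∪ {s | 1 < s.re})
        ∪ ({s : ℂ | 0 < s.re} ∩ {s | -1 < -1 * s.im - s.re}) := by
    ext s
    simp only [mem_ofPred_eq, mem_union, mem_inter_iff, ne_eq, Complex.ext_iff, one_re, one_im]
    grind
  rw [hU]
  refine IsPreconnected.union (1 / 2) ?_ ?_ (IsPreconnected.union (2 + 2 * I) ?_ ?_
    (hconvex 1).isPreconnected (convex_halfSpace_re_gt 1).isPreconnected)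
    (hconvex (-1)).isPreconnected
  all_goals norm_num

theorem zetaViaSawtooth_eq_riemannZeta {s : ℂ} (hs0 : 0 < s.re) (hs1 : s ≠ 1) :
    zetaViaSawtooth s = riemannZeta s := by
  have hU : IsOpen {s : ℂ | 0 < s.re ∧ s ≠ 1} :=
    (isOpen_lt continuous_const continuous_re).inter isOpen_ne
  refine DifferentiableOn.analyticOnNhd (fun z hz ↦
      (differentiableAt_zetaViaSawtooth hz.1 hz.2).differentiableWithinAt) hU
    |>.eqOn_of_preconnected_of_eventuallyEq (analyticOn_riemannZeta.mono fun z hz ↦ hz.2)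
      isPreconnected_re_pos_diff_one (z₀ := 2) (by norm_num) ?_ ⟨hs0, hs1⟩
  filter_upwards [(isOpen_lt continuous_const continuous_re).mem_nhds
    (by norm_num : (1 : ℝ) < (2 : ℂ).re)] with z hz
  exact zetaViaSawtooth_eq_riemannZeta_of_one_lt_re hz

theorem partial_sum_zeta_sawtooth (s : ℂ) (hs0 : 0 < s.re) (hs1 : s.re < 1)
    (x : ℝ) (hx : 1 ≤ x) :
    ∑ n ∈ Finset.Icc 1 ⌊x⌋₊, (n : ℂ) ^ (-s)
      = riemannZeta s + (x : ℂ) ^ (1 - s) / (1 - s)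
        - ((Int.fract x - 1/2 : ℝ) : ℂ) * (x : ℂ) ^ (-s)
        + s * ∫ t in Set.Ioi x, ((Int.fract t - 1/2 : ℝ) : ℂ) * (t : ℂ) ^ (-s - 1) := by
  have hs1' : s ≠ 1 := by rintro rfl; simp at hs1
  rw [sum_Icc_cpow_neg_eq_zetaViaSawtooth_add hs0 hs1' hx,
    zetaViaSawtooth_eq_riemannZeta hs0 hs1']
  rfl
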